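/- The space of smooth solutions y : ℝ³ → ℝ of the system ∂₁∂₁ y = 0, ∂₁∂₂ y = 0, ∂₂∂₂ y = 0, ∂₃∂₃ y − x₂ · ∂₁ y = 0 is a real vector space of dimension 6; explicitly every solution has the form y = a(x₁x₃ + x₂x₃³/6) + b(x₁ + x₂x₃²/2) + c x₂ + d x₃ + e x₂x₃ + f for constants a,b,c,d,e,f ∈ ℝ (after a suitable choice of basis). -/

import Mathlib

noncomputable def pd (i : Fin 3) (f : (Fin 3 → ℝ) → ℝ) : (Fin 3 → ℝ) → ℝ :=
  fun x => fderiv ℝ f x (Pi.single i 1)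

noncomputable def solBasis : Fin 6 → ((Fin 3 → ℝ) → ℝ) :=
  ![fun x => x 0 * x 2 + x 1 * (x 2) ^ 3 / 6,
    fun x => x 0 + x 1 * (x 2) ^ 2 / 2,
    fun x => x 1,
    fun x => x 2,
    fun x => x 1 * x 2,
    fun _ => 1]

lemma pd_hasFDerivAt {f : (Fin 3 → ℝ) → ℝ} {f' : (Fin 3 → ℝ) →L[ℝ] ℝ} {x} (h : HasFDerivAt f f' x)
    (i : Fin 3) : pd i f x = f' (Pi.single i 1) := by rw [pd, h.fderiv]

lemma pd_contDiff {f} (hf : ContDiff ℝ (⊤ : ℕ∞) f) (i : Fin 3) : ContDiff ℝ (⊤ : ℕ∞) (pd i f) :=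
  (ContinuousLinearMap.apply ℝ ℝ (Pi.single i 1 : Fin 3 → ℝ)).contDiff.comp
    (hf.fderiv_right (by simp))

lemma pd_comm {f} (hf : ContDiff ℝ (⊤ : ℕ∞) f) (i j : Fin 3) (x) :
    pd i (pd j f) x = pd j (pd i f) x := by
  have hd : ∀ y, HasFDerivAt f (fderiv ℝ f y) y :=
    fun y => (hf.differentiable (by simp) y).hasFDerivAt
  have hf' : ContDiff ℝ (⊤ : ℕ∞) (fderiv ℝ f) := hf.fderiv_right (by simp)
  have hx : HasFDerivAt (fderiv ℝ f) (fderiv ℝ (fderiv ℝ f) x) x :=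
    (hf'.differentiable (by simp) x).hasFDerivAt
  have key : ∀ (k l : Fin 3), pd k (pd l f) x
      = (fderiv ℝ (fderiv ℝ f) x (Pi.single k 1)) (Pi.single l 1) := by
    intro k l
    have h2 : HasFDerivAt (pd l f)
        ((ContinuousLinearMap.apply ℝ ℝ (Pi.single l 1 : Fin 3 → ℝ)).comp
          (fderiv ℝ (fderiv ℝ f) x)) x :=
      (ContinuousLinearMap.apply ℝ ℝ (Pi.single l 1 : Fin 3 → ℝ)).hasFDerivAt.comp x hx
    rw [pd_hasFDerivAt h2]; rfl
  rw [key i j, key j i, second_derivative_symmetric hd hx]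

lemma coordPow (j : Fin 3) (p : ℕ) (x : Fin 3 → ℝ) :
    HasFDerivAt (fun x : Fin 3 → ℝ => x j ^ p)
      (((p : ℝ) * x j ^ (p - 1)) • (ContinuousLinearMap.proj j : (Fin 3 → ℝ) →L[ℝ] ℝ)) x := by
  induction p with
  | zero => simpa using hasFDerivAt_const (1 : ℝ) x
  | succ n ih =>
    have h := ih.mul (hasFDerivAt_apply j x)
    have hfun : (fun y : Fin 3 → ℝ => y j ^ (n + 1)) = fun y => y j ^ n * y j :=
      funext fun y => pow_succ _ _
    rw [hfun]
    refine h.congr_fderiv ?_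
    ext v
    simp only [ContinuousLinearMap.smul_apply, ContinuousLinearMap.add_apply,
      ContinuousLinearMap.proj_apply, smul_eq_mul]
    cases n with
    | zero => simp
    | succ m =>
      simp only [Nat.add_sub_cancel, Nat.cast_add, Nat.cast_one, pow_succ]
      ring

def mval (m : ℝ × ℕ × ℕ × ℕ) (x : Fin 3 → ℝ) : ℝ :=
  m.1 * x 0 ^ m.2.1 * x 1 ^ m.2.2.1 * x 2 ^ m.2.2.2

def dM (i : Fin 3) (m : ℝ × ℕ × ℕ × ℕ) : ℝ × ℕ × ℕ × ℕ :=
  if i = 0 then (m.1 * m.2.1, m.2.1 - 1, m.2.2.1, m.2.2.2)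
  else if i = 1 then (m.1 * m.2.2.1, m.2.1, m.2.2.1 - 1, m.2.2.2)
  else (m.1 * m.2.2.2, m.2.1, m.2.2.1, m.2.2.2 - 1)

def evalP (L : List (ℝ × ℕ × ℕ × ℕ)) (x : Fin 3 → ℝ) : ℝ := (L.map (mval · x)).sum

def dP (i : Fin 3) (L : List (ℝ × ℕ × ℕ × ℕ)) : List (ℝ × ℕ × ℕ × ℕ) := L.map (dM i)

lemma pd_mval (i : Fin 3) (m) (x) : pd i (mval m) x = mval (dM i m) x := by
  obtain ⟨c, p, q, r⟩ := m
  have H := (((coordPow 0 p x).const_mul c).mul (coordPow 1 q x)).mul (coordPow 2 r x)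
  have H' : HasFDerivAt (mval (c, p, q, r)) _ x := H
  rw [pd_hasFDerivAt H']
  fin_cases i <;>
    simp [dM, mval, Pi.single_apply] <;> ring

lemma mval_differentiable (m) : Differentiable ℝ (mval m) := by
  obtain ⟨c, p, q, r⟩ := m
  intro x
  have H := (((coordPow 0 p x).const_mul c).mul (coordPow 1 q x)).mul (coordPow 2 r x)
  have H' : HasFDerivAt (mval (c, p, q, r)) _ x := H
  exact H'.differentiableAt

lemma pd_add {f g : (Fin 3 → ℝ) → ℝ} {x} (hf : DifferentiableAt ℝ f x)
    (hg : DifferentiableAt ℝ g x) (i : Fin 3) :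
    pd i (fun y => f y + g y) x = pd i f x + pd i g x := by
  simp [pd, fderiv_fun_add hf hg]

lemma pd_sub {f g : (Fin 3 → ℝ) → ℝ} {x} (hf : DifferentiableAt ℝ f x)
    (hg : DifferentiableAt ℝ g x) (i : Fin 3) :
    pd i (fun y => f y - g y) x = pd i f x - pd i g x := by
  simp [pd, fderiv_fun_sub hf hg]

lemma pd_mul {f g : (Fin 3 → ℝ) → ℝ} {x} (hf : DifferentiableAt ℝ f x)
    (hg : DifferentiableAt ℝ g x) (i : Fin 3) :
    pd i (fun y => f y * g y) x = f x * pd i g x + g x * pd i f x := by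
  simp [pd, fderiv_fun_mul hf hg]

lemma pd_zero (i : Fin 3) (x) : pd i (fun _ => (0:ℝ)) x = 0 := by
  simp [pd, fderiv_const]

lemma pd_coord (i j : Fin 3) (x) :
    pd i (fun x : Fin 3 → ℝ => x j) x = if i = j then 1 else 0 := by
  rw [pd_hasFDerivAt (hasFDerivAt_apply j x)]
  rcases eq_or_ne i j with h | h
  · simp [h]
  · simp [Pi.single_apply, h, Ne.symm h]

lemma fin3_cases (P : Fin 3 → Prop) (h0 : P 0) (h1 : P 1) (h2 : P 2) : ∀ i, P i := by
  intro i; fin_cases i <;> assumption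

lemma evalP_differentiable (L) : Differentiable ℝ (evalP L) := by
  induction L with
  | nil =>
    have : evalP [] = fun _ : Fin 3 → ℝ => (0:ℝ) := by funext x; simp [evalP]
    rw [this]; exact differentiable_const 0
  | cons m L ih =>
    have : evalP (m :: L) = fun x => mval m x + evalP L x := by
      funext x; simp [evalP]
    rw [this]; exact (mval_differentiable m).add ih

lemma pd_evalP (i : Fin 3) (L) (x) : pd i (evalP L) x = evalP (dP i L) x := by
  induction L with
  | nil => rw [show evalP [] = fun _ => (0:ℝ) from funext fun x => by simp [evalP]]; simpa [evalP, dP] using pd_zero i x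
  | cons m L ih =>
    have h1 : evalP (m :: L) = fun x => mval m x + evalP L x := by
      funext x; simp [evalP]
    have h2 : evalP (dP i (m :: L)) x = mval (dM i m) x + evalP (dP i L) x := by
      simp [evalP, dP]
    rw [h1, h2, pd_add (mval_differentiable m x) (evalP_differentiable L x), pd_mval, ih]

lemma eq_const_of_pd_zero {u : (Fin 3 → ℝ) → ℝ} (hu : Differentiable ℝ u)
    (h : ∀ i x, pd i u x = 0) (x) : u x = u 0 := by
  apply is_const_of_fderiv_eq_zero hu
  intro z
  ext v
  have hv : v = v 0 • (Pi.single 0 1 : Fin 3 → ℝ) + v 1 • (Pi.single 1 1 : Fin 3 → ℝ)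
      + v 2 • (Pi.single 2 1 : Fin 3 → ℝ) := by
    funext j; fin_cases j <;> simp [Pi.single_apply]
  have h0 := h 0 z; have h1 := h 1 z; have h2 := h 2 z
  simp only [pd] at h0 h1 h2
  rw [hv]
  simp [map_add, map_smul, h0, h1, h2]

lemma repr_of_pd {u : (Fin 3 → ℝ) → ℝ} (hu : Differentiable ℝ u) (L)
    (h0 : ∀ x, pd 0 u x = evalP (dP 0 L) x)
    (h1 : ∀ x, pd 1 u x = evalP (dP 1 L) x)
    (h2 : ∀ x, pd 2 u x = evalP (dP 2 L) x) (x) :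
    u x = u 0 - evalP L 0 + evalP L x := by
  have h : ∀ i, ∀ x, pd i u x = evalP (dP i L) x :=
    fin3_cases (fun i => ∀ x, pd i u x = evalP (dP i L) x) h0 h1 h2
  have hz := eq_const_of_pd_zero (u := fun x => u x - evalP L x)
    (hu.sub (evalP_differentiable L)) (fun i x => by
      rw [pd_sub (hu x) (evalP_differentiable L x), h i x, pd_evalP]; try ring) x
  linarith

/-- The smooth solutions of `∂₁∂₁y = 0, ∂₁∂₂y = 0, ∂₂∂₂y = 0, ∂₃∂₃y − x₂∂₁y = 0`
form a 6-dimensional real vector space with the explicit basis above. -/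
theorem stmt_14 :
    LinearIndependent ℝ solBasis ∧
    ∀ y : (Fin 3 → ℝ) → ℝ, ContDiff ℝ (⊤ : ℕ∞) y →
      ((∀ x, pd 0 (pd 0 y) x = 0 ∧ pd 0 (pd 1 y) x = 0 ∧ pd 1 (pd 1 y) x = 0 ∧
          pd 2 (pd 2 y) x - x 1 * pd 0 y x = 0) ↔
        ∃ c : Fin 6 → ℝ, y = ∑ i, c i • solBasis i) := by
  constructor
  · rw [Fintype.linearIndependent_iff]
    intro c hc
    have key : ∀ v : Fin 3 → ℝ,
        c 0 * (v 0 * v 2 + v 1 * (v 2)^3 / 6) + c 1 * (v 0 + v 1 * (v 2)^2 / 2)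
          + c 2 * v 1 + c 3 * v 2 + c 4 * (v 1 * v 2) + c 5 * 1 = 0 := by
      intro v
      have h := congrFun hc v
      simp only [Finset.sum_apply, Pi.smul_apply, smul_eq_mul, Fin.sum_univ_six,
        Pi.zero_apply] at h
      exact h
    have k1 := key ![0,0,0]
    have k2 := key ![1,0,0]
    have k3 := key ![0,1,0]
    have k4 := key ![0,0,1]
    have k5 := key ![1,0,1]
    have k6 := key ![0,1,1]
    norm_num [Matrix.cons_val_two, Matrix.tail_cons, Matrix.head_cons] at k1 k2 k3 k4 k5 k6
    have e0 : c 0 = 0 := by linarith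
    have e1 : c 1 = 0 := by linarith
    have e2 : c 2 = 0 := by linarith
    have e3 : c 3 = 0 := by linarith
    have e4 : c 4 = 0 := by linarith
    have e5 : c 5 = 0 := by linarith
    intro i
    fin_cases i <;> assumption
  · intro y hy
    constructor
    · -- forward: solutions lie in the span
      intro H
      have hy1 : ∀ x, pd 0 (pd 0 y) x = 0 := fun x => (H x).1
      have hy2 : ∀ x, pd 0 (pd 1 y) x = 0 := fun x => (H x).2.1
      have hy3 : ∀ x, pd 1 (pd 1 y) x = 0 := fun x => (H x).2.2.1
      have hy4 : ∀ x, pd 2 (pd 2 y) x = x 1 * pd 0 y x := fun x => by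
        have := (H x).2.2.2; linarith
      have h4f : pd 2 (pd 2 y) = fun x => x 1 * pd 0 y x := funext hy4
      -- smoothness / differentiability
      have hu : ContDiff ℝ (⊤ : ℕ∞) (pd 0 y) := pd_contDiff hy 0
      have hv : ContDiff ℝ (⊤ : ℕ∞) (pd 1 y) := pd_contDiff hy 1
      have hw : ContDiff ℝ (⊤ : ℕ∞) (pd 2 y) := pd_contDiff hy 2
      have hcoord1 : ∀ x, DifferentiableAt ℝ (fun z : Fin 3 → ℝ => z 1) x :=
        fun x => (hasFDerivAt_apply 1 x).differentiableAt
      set a := pd 2 (pd 0 y) 0 with ha_def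
      set b := pd 0 y 0 with hb_def
      set cC := pd 1 y 0 with hc_def
      set d := pd 2 y 0 with hd_def
      set eE := pd 2 (pd 1 y) 0 with he_def
      set f := y 0 with hf_def
      -- Step 1a : pd 2 (pd 0 y) is constant (= a)
      have hu0f : pd 0 (pd 0 y) = fun _ => (0:ℝ) := funext hy1
      have hu1f : pd 1 (pd 0 y) = fun _ => (0:ℝ) :=
        funext fun x => (pd_comm hy 1 0 x).trans (hy2 x)
      have hstep1a : ∀ x, pd 2 (pd 0 y) x = a := by
        intro x
        apply eq_const_of_pd_zero ((pd_contDiff hu 2).differentiable (by simp))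
        apply fin3_cases
        · intro x
          rw [pd_comm hu 0 2 x, hu0f, pd_zero]
        · intro x
          rw [pd_comm hu 1 2 x, hu1f, pd_zero]
        · intro x
          have e1 : pd 2 (pd 0 y) = pd 0 (pd 2 y) := funext fun x => pd_comm hy 2 0 x
          rw [e1, pd_comm hw 2 0 x, h4f,
            pd_mul (hcoord1 x) ((hu.differentiable (by simp)) x) 0, pd_coord, hy1 x]
          norm_num
      -- Step 1b : pd 0 y x = b + a * x 2
      have hurep : ∀ x, pd 0 y x = b + a * x 2 := by
        intro x
        have hr := repr_of_pd (hu.differentiable (by simp)) [(a,0,0,1)]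
          (fun x => by simpa [evalP, dP, dM, mval] using hy1 x)
          (fun x => by
            have := (pd_comm hy 1 0 x).trans (hy2 x)
            simpa [evalP, dP, dM, mval] using this)
          (fun x => by simpa [evalP, dP, dM, mval] using hstep1a x) x
        simp [evalP, mval] at hr
        rw [hr]; try ring
      -- Step 2a : pd 2 (pd 1 y) x = eE + b * x 2 + a/2 * x 2 ^ 2
      have hv0f : pd 0 (pd 1 y) = fun _ => (0:ℝ) := funext hy2
      have hv1f : pd 1 (pd 1 y) = fun _ => (0:ℝ) := funext hy3
      have h21 : pd 2 (pd 1 y) = pd 1 (pd 2 y) := funext fun x => pd_comm hy 2 1 x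
      have hstep2a : ∀ x, pd 2 (pd 1 y) x = eE + b * x 2 + a/2 * x 2 ^ 2 := by
        intro x
        have hr := repr_of_pd ((pd_contDiff hv 2).differentiable (by simp))
          [(b,0,0,1),(a/2,0,0,2)]
          (fun x => by
            rw [pd_comm hv 0 2 x, hv0f, pd_zero]; simp [evalP, dP, dM, mval])
          (fun x => by
            rw [pd_comm hv 1 2 x, hv1f, pd_zero]; simp [evalP, dP, dM, mval])
          (fun x => by
            rw [h21, pd_comm hw 2 1 x, h4f,
              pd_mul (hcoord1 x) ((hu.differentiable (by simp)) x) 1, pd_coord]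
            have e2 : pd 1 (pd 0 y) x = 0 := (pd_comm hy 1 0 x).trans (hy2 x)
            rw [e2, hurep x]
            simp [evalP, dP, dM, mval]
            try ring) x
        simp [evalP, mval] at hr
        rw [hr]; try ring
      -- Step 2b : pd 1 y x = cC + eE * x 2 + b/2 * x2^2 + a/6 * x2^3
      have hvrep : ∀ x, pd 1 y x = cC + eE * x 2 + b/2 * x 2 ^ 2 + a/6 * x 2 ^ 3 := by
        intro x
        have hr := repr_of_pd (hv.differentiable (by simp))
          [(eE,0,0,1),(b/2,0,0,2),(a/6,0,0,3)]
          (fun x => by simpa [evalP, dP, dM, mval] using hy2 x)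
          (fun x => by simpa [evalP, dP, dM, mval] using hy3 x)
          (fun x => by
            rw [hstep2a x]; simp [evalP, dP, dM, mval]; try ring) x
        simp [evalP, mval] at hr
        rw [hr]; try ring
      -- Step 3 : pd 2 y x = d + a*x0 + eE*x1 + b*x1*x2 + a/2*x1*x2^2
      have hwrep : ∀ x, pd 2 y x
          = d + a * x 0 + eE * x 1 + b * (x 1 * x 2) + a/2 * (x 1 * x 2 ^ 2) := by
        intro x
        have hr := repr_of_pd (hw.differentiable (by simp))
          [(a,1,0,0),(eE,0,1,0),(b,0,1,1),(a/2,0,1,2)]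
          (fun x => by
            have e3 : pd 0 (pd 2 y) x = pd 2 (pd 0 y) x := pd_comm hy 0 2 x
            rw [e3, hstep1a x]; simp [evalP, dP, dM, mval]
          )
          (fun x => by
            have e4 : pd 1 (pd 2 y) x = pd 2 (pd 1 y) x := pd_comm hy 1 2 x
            rw [e4, hstep2a x]; simp [evalP, dP, dM, mval]; try ring)
          (fun x => by
            rw [hy4 x, hurep x]; simp [evalP, dP, dM, mval]; try ring) x
        simp [evalP, mval] at hr
        rw [hr]; try ring
      -- Step 4 : y itself
      have hyrep : ∀ x, y x = f + b * x 0 + cC * x 1 + d * x 2 + a * (x 0 * x 2)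
          + eE * (x 1 * x 2) + b/2 * (x 1 * x 2 ^ 2) + a/6 * (x 1 * x 2 ^ 3) := by
        intro x
        have hr := repr_of_pd (hy.differentiable (by simp))
          [(b,1,0,0),(cC,0,1,0),(d,0,0,1),(a,1,0,1),(eE,0,1,1),(b/2,0,1,2),(a/6,0,1,3)]
          (fun x => by rw [hurep x]; simp [evalP, dP, dM, mval]; try ring)
          (fun x => by rw [hvrep x]; simp [evalP, dP, dM, mval]; try ring)
          (fun x => by rw [hwrep x]; simp [evalP, dP, dM, mval]; try ring) x
        simp [evalP, mval] at hr
        rw [hr]; try ring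
      refine ⟨![a, b, cC, d, eE, f], ?_⟩
      funext x
      rw [hyrep x]
      have hs : (∑ i, (![a, b, cC, d, eE, f]) i • solBasis i) x
          = a * (x 0 * x 2 + x 1 * (x 2)^3 / 6) + b * (x 0 + x 1 * (x 2)^2 / 2)
            + cC * x 1 + d * x 2 + eE * (x 1 * x 2) + f * 1 := by
        simp only [Finset.sum_apply, Pi.smul_apply, smul_eq_mul, Fin.sum_univ_six]
        rfl
      rw [hs]
      ring
    · -- reverse : the explicit functions solve the system
      rintro ⟨cv, rfl⟩
      set LY : List (ℝ × ℕ × ℕ × ℕ) :=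
        [(cv 0,1,0,1),(cv 0/6,0,1,3),(cv 1,1,0,0),(cv 1/2,0,1,2),
         (cv 2,0,1,0),(cv 3,0,0,1),(cv 4,0,1,1),(cv 5,0,0,0)] with hLY
      have hYP : (∑ i, cv i • solBasis i) = evalP LY := by
        funext x
        have hs : (∑ i, cv i • solBasis i) x
            = cv 0 * (x 0 * x 2 + x 1 * (x 2)^3 / 6) + cv 1 * (x 0 + x 1 * (x 2)^2 / 2)
              + cv 2 * x 1 + cv 3 * x 2 + cv 4 * (x 1 * x 2) + cv 5 * 1 := by
          simp only [Finset.sum_apply, Pi.smul_apply, smul_eq_mul, Fin.sum_univ_six]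
          rfl
        rw [hs]
        simp [evalP, mval, hLY]
        ring
      have hp : ∀ i : Fin 3, pd i (evalP LY) = evalP (dP i LY) :=
        fun i => funext (pd_evalP i LY)
      intro x
      rw [hYP]
      refine ⟨?_, ?_, ?_, ?_⟩
      · rw [hp 0, pd_evalP]; simp [dP, dM, evalP, mval, hLY]
      · rw [hp 1, pd_evalP]; simp [dP, dM, evalP, mval, hLY]
      · rw [hp 1, pd_evalP]; simp [dP, dM, evalP, mval, hLY]
      · rw [hp 2, pd_evalP, pd_evalP]; simp [dP, dM, evalP, mval, hLY]; ring
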